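/- Let 0 → ℱ → 𝒢 → ℬ̃ → 0 be a short exact sequence of coherent sheaves on ℙ^n (n ≥ 2) arising from a graded exact sequence 0 → F → D_0(f)(−δ) → B → 0 with F = ⊕_{j=1}^{n-1} S(−d_j−δ) free and ℱ the associated sheaf of F. Since H^1(ℙ^n, 𝒪(u)) = 0 for all integers u and n ≥ 2, the induced sequence of graded modules of global sections 0 → F → ⊕_k H^0(𝒢(k)) → B^s → 0 is exact, where B^s = ⊕_k H^0(ℙ^n, ℬ̃(k)) is the saturation of B. In particular, if B injects into the module of global sections of its sheafification via the natural map with the same shifts, then B = B^s, i.e. the Bourbaki ideal B(f, ρ̂) of a tame hypersurface is a saturated ideal. -/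

import Mathlib

open MvPolynomial

noncomputable section

def IsJacobianSyzygy (n : ℕ) (f : MvPolynomial (Fin (n + 1)) ℂ)
    (ρ : Fin (n + 1) → MvPolynomial (Fin (n + 1)) ℂ) : Prop :=
  ∑ j, ρ j * pderiv j f = 0

def bmat (n : ℕ)
    (ρ1 : Fin (n - 1) → Fin (n + 1) → MvPolynomial (Fin (n + 1)) ℂ)
    (ρ : Fin (n + 1) → MvPolynomial (Fin (n + 1)) ℂ) :
    Matrix (Fin (n + 1)) (Fin (n + 1)) (MvPolynomial (Fin (n + 1)) ℂ) :=
  Matrix.of fun i j =>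
    if h0 : (i : ℕ) = 0 then X j
    else if h1 : (i : ℕ) < n then ρ1 ⟨(i : ℕ) - 1, by omega⟩ j
    else ρ j

def IsTame (n : ℕ) (f : MvPolynomial (Fin (n + 1)) ℂ)
    (ρ1 : Fin (n - 1) → Fin (n + 1) → MvPolynomial (Fin (n + 1)) ℂ) : Prop :=
  LinearIndependent (MvPolynomial (Fin (n + 1)) ℂ) ρ1 ∧
  ∀ ρ : Fin (n + 1) → MvPolynomial (Fin (n + 1)) ℂ,
    IsJacobianSyzygy n f ρ → (bmat n ρ1 ρ).det = 0 →
      ρ ∈ Submodule.span (MvPolynomial (Fin (n + 1)) ℂ) (Set.range ρ1)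

/-- The Bourbaki ideal `B(f, ρ̂)`. -/
def bourbaki (n : ℕ) (f : MvPolynomial (Fin (n + 1)) ℂ)
    (ρ1 : Fin (n - 1) → Fin (n + 1) → MvPolynomial (Fin (n + 1)) ℂ) :
    Ideal (MvPolynomial (Fin (n + 1)) ℂ) :=
  Ideal.span {q | ∃ ρ, IsJacobianSyzygy n f ρ ∧ (bmat n ρ1 ρ).det = f * q}

/-!
Write `Δ ρ = det (bmat n ρ1 ρ)`, a linear form in the last row `ρ`, and `Syz f` for the module of
Jacobian syzygies; then `B(f, ρ̂) = Δ(Syz f) : f`, and tameness says that the kernel of `Δ` on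
`Syz f` is the free module on `ρ̂`. So it suffices that `X₀ h, X₁ h, X₂ h ∈ Δ(Syz f)` forces
`h ∈ Δ(Syz f)`. Writing `X_a h = Δ ρ_a`, each `X_b ρ_a - X_a ρ_b` lies in the kernel, and its
coefficients `c_ab` on `ρ̂` form a Koszul cocycle in `X₀, X₁, X₂`. Exactness of the Koszul complex
(the algebraic form of `H¹(ℙⁿ, 𝒪(u)) = 0`) gives `c₀₁ ∈ (X₀, X₁)`, which lets one correct `ρ₀` by an
element of `span ρ̂` to a syzygy divisible by `X₀`; its quotient `ρ` satisfies `Δ ρ = h`.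
-/

namespace MvPolynomial

variable {σ K : Type*} [CommRing K]

theorem mem_ideal_span_X_image_of_X_mul_mem {s : Set σ} {j : σ} (hj : j ∉ s)
    {p : MvPolynomial σ K} (h : X j * p ∈ Ideal.span (X '' s : Set (MvPolynomial σ K))) :
    p ∈ Ideal.span (X '' s : Set (MvPolynomial σ K)) := by
  classical
  rw [mem_ideal_span_X_image] at h ⊢
  intro m hm
  obtain ⟨i, hi, hne⟩ := h (Finsupp.single j 1 + m) <| by
    rw [support_X_mul]
    exact Finset.mem_map_of_mem _ hm
  have hji : j ≠ i := fun hji => hj (hji ▸ hi)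
  exact ⟨i, hi, by simpa [Finsupp.single_apply, hji] using hne⟩

theorem X_dvd_of_X_dvd_X_mul {i j : σ} (hij : i ≠ j) {p : MvPolynomial σ K}
    (h : X i ∣ X j * p) : X i ∣ p := by
  rw [← Ideal.mem_span_singleton, ← Set.image_singleton] at h ⊢
  exact mem_ideal_span_X_image_of_X_mul_mem (Set.mem_singleton_iff.not.mpr hij.symm) h

theorem exists_eq_X_smul_of_X_smul_eq {κ : Type*} {i j : σ} (hij : i ≠ j)
    {a b : κ → MvPolynomial σ K}
    (h : (X j : MvPolynomial σ K) • a = (X i : MvPolynomial σ K) • b) :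
    ∃ τ, a = (X i : MvPolynomial σ K) • τ := by
  have hdvd (k : κ) : (X i : MvPolynomial σ K) ∣ a k :=
    X_dvd_of_X_dvd_X_mul hij ⟨b k, congrFun h k⟩
  choose τ hτ using hdvd
  exact ⟨τ, by ext1 k; exact hτ k⟩

end MvPolynomial


theorem koszul_relation_of_linearIndependent {R M ι : Type*} [CommRing R] [AddCommGroup M]
    [Module R M] [Fintype ι] {v : ι → M} (hv : LinearIndependent R v) {x₀ x₁ x₂ : R}
    {ρ₀ ρ₁ ρ₂ : M} {a b c : ι → R} (ha : ∑ k, a k • v k = x₁ • ρ₀ - x₀ • ρ₁)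
    (hb : ∑ k, b k • v k = x₂ • ρ₀ - x₀ • ρ₂) (hc : ∑ k, c k • v k = x₂ • ρ₁ - x₁ • ρ₂)
    (k : ι) : x₂ * a k - x₁ * b k + x₀ * c k = 0 := by
  have hsum : ∑ k, (x₂ * a k - x₁ * b k + x₀ * c k) • v k = 0 :=
    calc ∑ k, (x₂ * a k - x₁ * b k + x₀ * c k) • v k
        = x₂ • (∑ k, a k • v k) - x₁ • (∑ k, b k • v k) + x₀ • (∑ k, c k • v k) := by
          simp only [add_smul, sub_smul, mul_smul, Finset.sum_add_distrib,
            Finset.sum_sub_distrib, Finset.smul_sum]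
      _ = 0 := by rw [ha, hb, hc]; module
  exact Fintype.linearIndependent_iff.mp hv _ hsum k

section Saturation

variable {σ K κ ι : Type*} [CommRing K] [Fintype ι]
  {N : Submodule (MvPolynomial σ K) (κ → MvPolynomial σ K)}
  {Δ : (κ → MvPolynomial σ K) →ₗ[MvPolynomial σ K] MvPolynomial σ K}
  {v : ι → κ → MvPolynomial σ K}

theorem mem_map_of_X_smul_sub_X_smul_eq {i j : σ} (hij : i ≠ j)
    (hN : ∀ ρ, (X i : MvPolynomial σ K) • ρ ∈ N → ρ ∈ N)
    (hvN : ∀ k, v k ∈ N) (hΔv : ∀ k, Δ (v k) = 0) {ρ₀ ρ₁ : κ → MvPolynomial σ K}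
    (hρ₀ : ρ₀ ∈ N) {h : MvPolynomial σ K} (hΔρ₀ : Δ ρ₀ = X i * h) (u w : ι → MvPolynomial σ K)
    (hρ : (X j : MvPolynomial σ K) • ρ₀ - (X i : MvPolynomial σ K) • ρ₁ =
      ∑ k, (X i * u k + X j * w k) • v k) :
    h ∈ N.map Δ := by
  simp only [add_smul, mul_smul, Finset.sum_add_distrib, ← Finset.smul_sum] at hρ
  have hσ₀ : (X j : MvPolynomial σ K) • (ρ₀ - ∑ k, w k • v k) =
      (X i : MvPolynomial σ K) • (ρ₁ + ∑ k, u k • v k) := by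
    linear_combination (norm := module) hρ
  obtain ⟨τ, hτ⟩ := exists_eq_X_smul_of_X_smul_eq hij hσ₀
  have hσ₀N : X i • τ ∈ N :=
    hτ ▸ N.sub_mem hρ₀ (N.sum_mem fun k _ => N.smul_mem _ (hvN k))
  have hΔτ : X i * Δ τ = X i * h := by
    rw [← smul_eq_mul, ← map_smul, ← hτ, ← hΔρ₀]
    simp [hΔv]
  exact ⟨τ, hN τ hσ₀N, X_mul_cancel_left_iff.mp hΔτ⟩

theorem mem_map_of_X_mul_mem_map {i₀ i₁ i₂ : σ} (h₀₁ : i₀ ≠ i₁) (h₀₂ : i₀ ≠ i₂) (h₁₂ : i₁ ≠ i₂)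
    (hN : ∀ i ρ, (X i : MvPolynomial σ K) • ρ ∈ N → ρ ∈ N)
    (hvN : ∀ k, v k ∈ N) (hΔv : ∀ k, Δ (v k) = 0) (hv : LinearIndependent (MvPolynomial σ K) v)
    (hker : N ⊓ LinearMap.ker Δ ≤ Submodule.span (MvPolynomial σ K) (Set.range v))
    {h : MvPolynomial σ K} (hX₀ : X i₀ * h ∈ N.map Δ) (hX₁ : X i₁ * h ∈ N.map Δ)
    (hX₂ : X i₂ * h ∈ N.map Δ) :
    h ∈ N.map Δ := by
  obtain ⟨ρ₀, hρ₀, hΔρ₀⟩ := hX₀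
  obtain ⟨ρ₁, hρ₁, hΔρ₁⟩ := hX₁
  obtain ⟨ρ₂, hρ₂, hΔρ₂⟩ := hX₂
  have hdiff {x y : MvPolynomial σ K} {ρ ρ' : κ → MvPolynomial σ K} (hρ : ρ ∈ N) (hρ' : ρ' ∈ N)
      (hΔρ : Δ ρ = x * h) (hΔρ' : Δ ρ' = y * h) : ∃ c : ι → MvPolynomial σ K,
        ∑ k, c k • v k = y • ρ - x • ρ' := by
    refine (Submodule.mem_span_range_iff_exists_fun _).mp (hker (Submodule.mem_inf.mpr ⟨?_, ?_⟩))
    · exact N.sub_mem (N.smul_mem y hρ) (N.smul_mem x hρ')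
    · simp only [LinearMap.mem_ker, map_sub, map_smul, hΔρ, hΔρ', smul_eq_mul]
      ring
  obtain ⟨a, ha⟩ := hdiff hρ₀ hρ₁ hΔρ₀ hΔρ₁
  obtain ⟨b, hb⟩ := hdiff hρ₀ hρ₂ hΔρ₀ hΔρ₂
  obtain ⟨c, hc⟩ := hdiff hρ₁ hρ₂ hΔρ₁ hΔρ₂
  have ha_mem (k : ι) : a k ∈ Ideal.span (X '' {i₀, i₁} : Set (MvPolynomial σ K)) := by
    refine mem_ideal_span_X_image_of_X_mul_mem (j := i₂) (by simp [h₀₂.symm, h₁₂.symm]) ?_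
    rw [Set.image_pair, Ideal.mem_span_pair]
    exact ⟨-c k, b k, by linear_combination -koszul_relation_of_linearIndependent hv ha hb hc k⟩
  rw [Set.image_pair] at ha_mem
  choose u w huw using fun k => Ideal.mem_span_pair.mp (ha_mem k)
  refine mem_map_of_X_smul_sub_X_smul_eq h₀₁ (hN i₀) hvN hΔv hρ₀ hΔρ₀ u w (ha.symm.trans ?_)
  exact Finset.sum_congr rfl fun k _ => by rw [← huw k, mul_comm (u k), mul_comm (w k)]

end Saturation

section JacobianSyzygies

variable {σ K : Type*} [Fintype σ] [CommRing K]

def jacobianSyzygies (f : MvPolynomial σ K) :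
    Submodule (MvPolynomial σ K) (σ → MvPolynomial σ K) :=
  LinearMap.ker (Fintype.linearCombination (MvPolynomial σ K) fun j => pderiv j f)

theorem X_smul_mem_jacobianSyzygies_iff {f : MvPolynomial σ K} {i : σ}
    {ρ : σ → MvPolynomial σ K} :
    (X i : MvPolynomial σ K) • ρ ∈ jacobianSyzygies f ↔ ρ ∈ jacobianSyzygies f := by
  rw [jacobianSyzygies, LinearMap.mem_ker, LinearMap.mem_ker, map_smul, smul_eq_mul,
    isRegular_X.left.mul_left_eq_zero_iff]

end JacobianSyzygies

theorem mem_jacobianSyzygies {n : ℕ} {f : MvPolynomial (Fin (n + 1)) ℂ}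
    {ρ : Fin (n + 1) → MvPolynomial (Fin (n + 1)) ℂ} :
    ρ ∈ jacobianSyzygies f ↔ IsJacobianSyzygy n f ρ :=
  Iff.rfl

section BourbakiMatrix

variable {n : ℕ} (ρ1 : Fin (n - 1) → Fin (n + 1) → MvPolynomial (Fin (n + 1)) ℂ)

theorem bmat_eq_updateRow (hn : n ≠ 0) (ρ : Fin (n + 1) → MvPolynomial (Fin (n + 1)) ℂ) :
    bmat n ρ1 ρ = (bmat n ρ1 0).updateRow (Fin.last n) ρ := by
  ext i j
  rcases eq_or_ne i (Fin.last n) with rfl | hi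
  · simp [bmat, hn]
  · have hi' : (i : ℕ) < n := Fin.val_lt_last hi
    simp [bmat, Matrix.updateRow_ne hi, hi']

def bmatDet : (Fin (n + 1) → MvPolynomial (Fin (n + 1)) ℂ) →ₗ[MvPolynomial (Fin (n + 1)) ℂ]
    MvPolynomial (Fin (n + 1)) ℂ :=
  Matrix.detRowAlternating.toMultilinearMap.toLinearMap (bmat n ρ1 0) (Fin.last n)

theorem bmatDet_apply (hn : n ≠ 0) (ρ : Fin (n + 1) → MvPolynomial (Fin (n + 1)) ℂ) :
    bmatDet ρ1 ρ = (bmat n ρ1 ρ).det := by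
  rw [bmat_eq_updateRow ρ1 hn]
  rfl

theorem det_bmat_self (k : Fin (n - 1)) : (bmat n ρ1 (ρ1 k)).det = 0 := by
  have hk : (k : ℕ) < n - 1 := k.isLt
  refine Matrix.det_zero_of_row_eq (i := ⟨k + 1, by omega⟩) (j := Fin.last n)
    (by simp [Fin.ext_iff]; omega) ?_
  ext1 j
  simp [bmat, show (k : ℕ) + 1 < n by omega, show n ≠ 0 by omega]

end BourbakiMatrix

section Bourbaki

variable {n : ℕ} {f : MvPolynomial (Fin (n + 1)) ℂ}
  {ρ1 : Fin (n - 1) → Fin (n + 1) → MvPolynomial (Fin (n + 1)) ℂ}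

theorem bourbaki_eq_colon (hn : n ≠ 0) :
    bourbaki n f ρ1 = ((jacobianSyzygies f).map (bmatDet ρ1)).colon {f} := by
  apply le_antisymm
  · refine Ideal.span_le.mpr fun q ⟨ρ, hρ, hdet⟩ => ?_
    rw [SetLike.mem_coe, Submodule.mem_colon_singleton, smul_eq_mul, mul_comm]
    exact ⟨ρ, mem_jacobianSyzygies.mpr hρ, (bmatDet_apply ρ1 hn ρ).trans hdet⟩
  · intro q hq
    obtain ⟨ρ, hρ, hdet⟩ := Submodule.mem_colon_singleton.mp hq
    exact Ideal.subset_span ⟨ρ, mem_jacobianSyzygies.mp hρ,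
      (bmatDet_apply ρ1 hn ρ).symm.trans (hdet.trans (mul_comm q f))⟩

theorem IsTame.inf_ker_bmatDet_le_span (hn : n ≠ 0) (htame : IsTame n f ρ1) :
    jacobianSyzygies f ⊓ LinearMap.ker (bmatDet ρ1) ≤
      Submodule.span (MvPolynomial (Fin (n + 1)) ℂ) (Set.range ρ1) :=
  fun ρ hρ => htame.2 ρ (mem_jacobianSyzygies.mp hρ.1) ((bmatDet_apply ρ1 hn ρ).symm.trans hρ.2)

end Bourbaki

theorem stmt_17_general (n : ℕ) (hn : 2 ≤ n)
    (f : MvPolynomial (Fin (n + 1)) ℂ)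
    (ρ1 : Fin (n - 1) → Fin (n + 1) → MvPolynomial (Fin (n + 1)) ℂ)
    (hsyz : ∀ i, IsJacobianSyzygy n f (ρ1 i))
    (htame : IsTame n f ρ1) :
    ∀ g : MvPolynomial (Fin (n + 1)) ℂ,
      (∀ i : Fin (n + 1), X i * g ∈ bourbaki n f ρ1) → g ∈ bourbaki n f ρ1 := by
  intro g hg
  have hn0 : n ≠ 0 := by omega
  simp only [bourbaki_eq_colon hn0, Submodule.mem_colon_singleton, smul_eq_mul, mul_assoc]
    at hg ⊢
  exact mem_map_of_X_mul_mem_map (i₀ := ⟨0, by omega⟩) (i₁ := ⟨1, by omega⟩)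
    (i₂ := ⟨2, by omega⟩) (Fin.ne_of_val_ne (by norm_num)) (Fin.ne_of_val_ne (by norm_num))
    (Fin.ne_of_val_ne (by norm_num))
    (fun _ _ => X_smul_mem_jacobianSyzygies_iff.mp)
    (fun k => mem_jacobianSyzygies.mpr (hsyz k))
    (fun k => (bmatDet_apply ρ1 hn0 _).trans (det_bmat_self ρ1 k)) htame.1
    (htame.inf_ker_bmatDet_le_span hn0) (hg _) (hg _) (hg _)

/-- Since `H¹(ℙⁿ, 𝒪(u)) = 0` for `n ≥ 2`, the Bourbaki ideal `B(f, ρ̂)` of a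
hypersurface `V : f = 0` which is tame with respect to `ρ̂` is a saturated
ideal: if `x_i·g ∈ B(f,ρ̂)` for all `i`, then `g ∈ B(f,ρ̂)`. -/
theorem stmt_17 (n d : ℕ) (hn : 2 ≤ n)
    (f : MvPolynomial (Fin (n + 1)) ℂ) (hd : 3 ≤ d)
    (hf : f.IsHomogeneous d) (hred : Squarefree f)
    (e : Fin (n - 1) → ℕ)
    (ρ1 : Fin (n - 1) → Fin (n + 1) → MvPolynomial (Fin (n + 1)) ℂ)
    (hsyz : ∀ i, IsJacobianSyzygy n f (ρ1 i))
    (hhom : ∀ i k, (ρ1 i k).IsHomogeneous (e i))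
    (htame : IsTame n f ρ1) :
    ∀ g : MvPolynomial (Fin (n + 1)) ℂ,
      (∀ i : Fin (n + 1), X i * g ∈ bourbaki n f ρ1) → g ∈ bourbaki n f ρ1 :=
  stmt_17_general n hn f ρ1 hsyz htame
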